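/- Let A be an NBW over an alphabet Σ. Every ω-word w ∈ Σ^ω belongs to [u]_{∼ᵒ}[v]_{≈ᵒᵤ}^ω for some u ∈ Σ* and nonempty v ∈ Σ⁺ with uv ∼ᵒ u; that is, Σ^ω = ⋃ { [u]_{∼ᵒ}[v]_{≈ᵒᵤ}^ω : u ∈ Σ*, v ∈ Σ⁺, uv ∼ᵒ u }. -/

import Mathlib

open scoped Classical

/-- A nondeterministic Büchi automaton over alphabet `α` with state type `Q`. -/
structure NBW (α : Type) (Q : Type) where
  I : Set Q
  δ : Q → α → Set Q
  F : Set Q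

namespace NBW

variable {α Q : Type}

/-- One-step successor set: `δ(S, a) = ⋃_{q ∈ S} δ(q, a)`. -/
def δStep (A : NBW α Q) (S : Set Q) (a : α) : Set Q := ⋃ q ∈ S, A.δ q a

/-- Extension of `δ` to finite words: `δ(S, ε) = S`, `δ(S, ua) = δ(δ(S, u), a)`. -/
def δSet (A : NBW α Q) (S : Set Q) (u : List α) : Set Q := u.foldl A.δStep S

/-- `A.Reach q u r` means `q →ᵘ r`: there is a run of `A` over `u` from `q` to `r`. -/
def Reach (A : NBW α Q) : Q → List α → Q → Prop
  | q, [], r => q = r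
  | q, a :: u, r => ∃ p ∈ A.δ q a, A.Reach p u r

/-- `A.FReach q u r` means `q ⇒ᵘ r`: there is a run of `A` over `u` from `q` to `r`
visiting some accepting state. -/
def FReach (A : NBW α Q) : Q → List α → Q → Prop
  | q, [], r => q = r ∧ q ∈ A.F
  | q, a :: u, r =>
      (q ∈ A.F ∧ ∃ p ∈ A.δ q a, A.Reach p u r) ∨ ∃ p ∈ A.δ q a, A.FReach p u r

/-- The classical congruence `∼`:  `u₁ ∼ u₂` iff for all states `q, r`,
`q →^{u₁} r ↔ q →^{u₂} r` and `q ⇒^{u₁} r ↔ q ⇒^{u₂} r`. -/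
def canoEq (A : NBW α Q) (u₁ u₂ : List α) : Prop :=
  ∀ q r : Q, (A.Reach q u₁ r ↔ A.Reach q u₂ r) ∧ (A.FReach q u₁ r ↔ A.FReach q u₂ r)

/-- The `∼`-equivalence class of `u`. -/
def canoClass (A : NBW α Q) (u : List α) : Set (List α) := {x | A.canoEq u x}

/-- The right congruence `∼ⁱ`: `u₁ ∼ⁱ u₂` iff `δ(I, u₁) = δ(I, u₂)`. -/
def iEq (A : NBW α Q) (u₁ u₂ : List α) : Prop := A.δSet A.I u₁ = A.δSet A.I u₂

/-- The `∼ⁱ`-equivalence class of `u`. -/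
def iClass (A : NBW α Q) (u : List α) : Set (List α) := {x | A.iEq u x}

/-- The relation `≈ᵤ`: `v₁ ≈ᵤ v₂` iff for all `q ∈ δ(I, u)` and all states `r`,
`q →^{v₁} r ↔ q →^{v₂} r` and `q ⇒^{v₁} r ↔ q ⇒^{v₂} r`. -/
def proEq (A : NBW α Q) (u v₁ v₂ : List α) : Prop :=
  ∀ q ∈ A.δSet A.I u, ∀ r : Q,
    (A.Reach q v₁ r ↔ A.Reach q v₂ r) ∧ (A.FReach q v₁ r ↔ A.FReach q v₂ r)

/-- The `≈ᵤ`-equivalence class of `v`. -/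
def proClass (A : NBW α Q) (u v : List α) : Set (List α) := {x | A.proEq u v x}

/-- Büchi acceptance of an ω-word `w : ℕ → α`. -/
def AcceptsOmega (A : NBW α Q) (w : ℕ → α) : Prop :=
  ∃ ρ : ℕ → Q, ρ 0 ∈ A.I ∧ (∀ i, ρ (i + 1) ∈ A.δ (ρ i) (w i)) ∧
    ∀ n, ∃ i, n ≤ i ∧ ρ i ∈ A.F

/-- The ω-language of `A`. -/
def L (A : NBW α Q) : Set (ℕ → α) := {w | A.AcceptsOmega w}

end NBW

/-- Elementwise concatenation of two languages of finite words. -/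
def Lang.concat {α : Type} (X Y : Set (List α)) : Set (List α) :=
  {z | ∃ x ∈ X, ∃ y ∈ Y, z = x ++ y}

/-- `OmegaLang U V` is the set of ω-words of the form `u₀ v₁ v₂ ⋯` with `u₀ ∈ U`
and each `vᵢ` a nonempty word in `V`: every finite prefix `u₀ v₁ ⋯ v_k` is a
prefix of `w`. -/
def OmegaLang {α : Type} (U V : Set (List α)) : Set (ℕ → α) :=
  {w | ∃ u₀ ∈ U, ∃ vs : ℕ → List α,
    (∀ i, vs i ≠ [] ∧ vs i ∈ V) ∧
    ∀ k : ℕ,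
      u₀ ++ ((List.range k).map vs).flatten =
        List.ofFn fun i : Fin (u₀ ++ ((List.range k).map vs).flatten).length => w i.1}

/-- The ω-language `[u]_∼ [v]_∼^ω` is proper if `[u][v] ⊆ [u]` and `[v][v] ⊆ [v]`. -/
def IsProper {α Q : Type} (A : NBW α Q) (u v : List α) : Prop :=
  Lang.concat (A.canoClass u) (A.canoClass v) ⊆ A.canoClass u ∧
  Lang.concat (A.canoClass v) (A.canoClass v) ⊆ A.canoClass v

/-- Drop empty sets from a list of sets. -/
noncomputable def filterNonempty {Q : Type} : List (Set Q) → List (Set Q)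
  | [] => []
  | S :: rest => if S = ∅ then filterNonempty rest else S :: filterNonempty rest

/-- Replace each entry by itself minus the union of all later entries
(keep only the rightmost occurrence of each state). -/
def pruneRight {Q : Type} : List (Set Q) → List (Set Q)
  | [] => []
  | S :: rest => (S \ rest.foldr (· ∪ ·) ∅) :: pruneRight rest

namespace NBW

variable {α Q : Type}

/-- The ordered `a`-successor `φ(⟨S₁, …, S_k⟩, a)`: split each `δ(S_j, a)` into its
non-accepting part followed by its accepting part, keep only the rightmost
occurrence of each state, and delete empty entries. -/
noncomputable def stepP (A : NBW α Q) (P : List (Set Q)) (a : α) : List (Set Q) :=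
  filterNonempty (pruneRight
    ((P.map fun S => [A.δStep S a \ A.F, A.δStep S a ∩ A.F]).flatten))

/-- The initial ordered partition `P₀ = ⟨I∖F, I∩F⟩` with empty entries deleted. -/
noncomputable def P0 (A : NBW α Q) : List (Set Q) :=
  filterNonempty [A.I \ A.F, A.I ∩ A.F]

/-- Extension of `φ` to finite words. -/
noncomputable def phi (A : NBW α Q) (P : List (Set Q)) (u : List α) : List (Set Q) :=
  u.foldl A.stepP P

/-- The right congruence `∼ᵒ`: `u₁ ∼ᵒ u₂` iff `φ(P₀, u₁) = φ(P₀, u₂)`. -/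
def oEq (A : NBW α Q) (u₁ u₂ : List α) : Prop := A.phi A.P0 u₁ = A.phi A.P0 u₂

/-- The `∼ᵒ`-equivalence class of `u`. -/
def oClass (A : NBW α Q) (u : List α) : Set (List α) := {x | A.oEq u x}

/-- `max { j | ∃ p ∈ S_j, p →^v q }` for an ordered partition `P = ⟨S₀, S₁, …⟩`
(indices 0-based). -/
noncomputable def maxRank (A : NBW α Q) (P : List (Set Q)) (v : List α) (q : Q) : ℕ :=
  sSup {j | ∃ p ∈ P.getD j ∅, A.Reach p v q}

/-- The relation `≈ᵒᵤ`: `v₁ ≈ᵒᵤ v₂` iff `uv₁ ∼ᵒ uv₂` and, writing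
`φ(P₀, u) = ⟨S₁, …, S_k⟩`, for every `q ∈ δ(I, uv₁)` the maximal index `j` with
`∃ p ∈ S_j, p →^{v₁} q` equals the maximal index `j` with `∃ p ∈ S_j, p →^{v₂} q`. -/
def oproEq (A : NBW α Q) (u v₁ v₂ : List α) : Prop :=
  A.oEq (u ++ v₁) (u ++ v₂) ∧
  ∀ q ∈ A.δSet A.I (u ++ v₁),
    A.maxRank (A.phi A.P0 u) v₁ q = A.maxRank (A.phi A.P0 u) v₂ q

/-- The `≈ᵒᵤ`-equivalence class of `v`. -/
def oproClass (A : NBW α Q) (u v : List α) : Set (List α) := {x | A.oproEq u v x}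

end NBW


section Aux

open scoped Classical

/-! ### Pigeonhole and infinite Ramsey for pairs -/

lemma exists_infinite_fiber' {C : Type*} [Finite C] (g : ℕ → C) {S : Set ℕ}
    (hS : S.Infinite) : ∃ c, {n ∈ S | g n = c}.Infinite := by
  by_contra h
  push_neg at h
  have hsub : S ⊆ ⋃ c : C, {n ∈ S | g n = c} := fun n hn => Set.mem_iUnion.2 ⟨g n, hn, rfl⟩
  exact hS ((Set.finite_iUnion h).subset hsub)

lemma infinite_ramsey_pairs {C : Type*} [Finite C] (f : ℕ → ℕ → C) :
    ∃ c : C, ∃ g : ℕ → ℕ, StrictMono g ∧ ∀ i j, i < j → f (g i) (g j) = c := by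
  classical
  have hstep : ∀ S : Set ℕ, S.Infinite → ∃ T : Set ℕ,
      T ⊆ S ∧ T.Infinite ∧ (∀ m ∈ T, sInf S < m) ∧
      ∀ m ∈ T, f (sInf S) m = f (sInf S) (sInf T) := by
    intro S hS
    have hS' : {m ∈ S | sInf S < m}.Infinite := by
      have : S \ Set.Iic (sInf S) ⊆ {m ∈ S | sInf S < m} := by
        intro m hm; exact ⟨hm.1, by simpa using hm.2⟩
      exact ((hS.diff (Set.finite_Iic _))).mono this
    obtain ⟨c, hc⟩ := exists_infinite_fiber' (f (sInf S)) hS'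
    refine ⟨_, fun m hm => hm.1.1, hc, fun m hm => hm.1.2, fun m hm => ?_⟩
    have hmem := Nat.sInf_mem hc.nonempty
    rw [hm.2, hmem.2]
  -- build the chain of infinite sets
  let next : {S : Set ℕ // S.Infinite} → {S : Set ℕ // S.Infinite} :=
    fun S => ⟨(hstep S.1 S.2).choose, (hstep S.1 S.2).choose_spec.2.1⟩
  let chain : ℕ → {S : Set ℕ // S.Infinite} := fun k =>
    Nat.rec (motive := fun _ => {S : Set ℕ // S.Infinite}) ⟨Set.univ, Set.infinite_univ⟩
      (fun _ S => next S) k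
  have chain_succ : ∀ k, chain (k + 1) = next (chain k) := fun k => rfl
  set a : ℕ → ℕ := fun k => sInf (chain k).1 with ha
  have hspec : ∀ k, (chain (k+1)).1 ⊆ (chain k).1 ∧ (∀ m ∈ (chain (k+1)).1, a k < m) ∧
      ∀ m ∈ (chain (k+1)).1, f (a k) m = f (a k) (a (k+1)) := by
    intro k
    have h := (hstep (chain k).1 (chain k).2).choose_spec
    exact ⟨h.1, h.2.2.1, h.2.2.2⟩
  have hmono : ∀ i j, i ≤ j → (chain j).1 ⊆ (chain i).1 := by
    intro i j hij
    induction j with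
    | zero => simp_all
    | succ j ih =>
        rcases Nat.lt_or_ge i (j+1) with h | h
        · exact ((hspec j).1).trans (ih (by omega))
        · have : i = j + 1 := by omega
          subst this; exact fun x hx => hx
  have hmem : ∀ k, a k ∈ (chain k).1 := fun k => Nat.sInf_mem (chain k).2.nonempty
  have hamono : StrictMono a := by
    apply strictMono_nat_of_lt_succ
    intro k
    exact (hspec k).2.1 _ (hmem (k+1))
  have hcolor : ∀ i j, i < j → f (a i) (a j) = f (a i) (a (i+1)) := by
    intro i j hij
    exact (hspec i).2.2 _ (hmono (i+1) j hij (hmem j))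
  obtain ⟨c₀, hc₀⟩ := exists_infinite_fiber' (fun k => f (a k) (a (k+1)))
    (Set.infinite_univ (α := ℕ))
  set K : Set ℕ := {n ∈ Set.univ | f (a n) (a (n+1)) = c₀} with hK
  haveI : Infinite K := hc₀.to_subtype
  let e := Nat.orderEmbeddingOfSet K
  have he : ∀ n, e n ∈ K := by
    intro n
    have : e n ∈ Set.range e := Set.mem_range_self n
    rwa [Nat.orderEmbeddingOfSet_range] at this
  refine ⟨c₀, a ∘ e, hamono.comp e.strictMono, fun i j hij => ?_⟩
  have h1 : f (a (e i)) (a (e j)) = f (a (e i)) (a (e i + 1)) :=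
    hcolor _ _ (e.strictMono hij)
  rw [Function.comp_apply, Function.comp_apply, h1]
  exact (he i).2

/-! ### Properties of ordered partitions -/

namespace NBW

variable {α Q : Type}

lemma reach_append (A : NBW α Q) (x y : List α) (p r : Q) :
    A.Reach p (x ++ y) r ↔ ∃ q, A.Reach p x q ∧ A.Reach q y r := by
  induction x generalizing p with
  | nil =>
      constructor
      · intro h; exact ⟨p, rfl, h⟩
      · rintro ⟨q, rfl, h⟩; exact h
  | cons a x ih =>
      simp only [List.cons_append, Reach]
      constructor
      · rintro ⟨s, hs, hr⟩
        obtain ⟨q, h1, h2⟩ := (ih s).1 hr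
        exact ⟨q, ⟨s, hs, h1⟩, h2⟩
      · rintro ⟨q, ⟨s, hs, h1⟩, h2⟩
        exact ⟨s, hs, (ih s).2 ⟨q, h1, h2⟩⟩

lemma phi_append (A : NBW α Q) (P : List (Set Q)) (x y : List α) :
    A.phi P (x ++ y) = A.phi (A.phi P x) y := by
  simp [phi]

end NBW

def GoodL {Q : Type} (L : List (Set Q)) : Prop :=
  L.Pairwise Disjoint ∧ ∀ S ∈ L, S ≠ ∅

lemma filterNonempty_sublist {Q : Type} (L : List (Set Q)) :
    (filterNonempty L).Sublist L := by
  induction L with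
  | nil => simp [filterNonempty]
  | cons S rest ih =>
      rw [filterNonempty]
      split
      · exact ih.trans (List.sublist_cons_self _ _)
      · exact ih.cons₂ _

lemma mem_filterNonempty_ne {Q : Type} {L : List (Set Q)} {S : Set Q}
    (h : S ∈ filterNonempty L) : S ≠ ∅ := by
  induction L with
  | nil => simp [filterNonempty] at h
  | cons T rest ih =>
      rw [filterNonempty] at h
      split at h
      · exact ih h
      · rcases List.mem_cons.1 h with h' | h'
        · subst h'; assumption
        · exact ih h'

lemma pruneRight_subset {Q : Type} :
    ∀ (L : List (Set Q)) (T : Set Q), T ∈ pruneRight L → T ⊆ L.foldr (· ∪ ·) ∅ := by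
  intro L
  induction L with
  | nil => simp [pruneRight]
  | cons S rest ih =>
      intro T hT
      rw [pruneRight] at hT
      rcases List.mem_cons.1 hT with h | h
      · subst h
        intro q hq
        exact Set.mem_union_left _ hq.1
      · intro q hq
        exact Set.mem_union_right _ (ih T h hq)

lemma pruneRight_pairwise {Q : Type} (L : List (Set Q)) :
    (pruneRight L).Pairwise Disjoint := by
  induction L with
  | nil => simp [pruneRight]
  | cons S rest ih =>
      rw [pruneRight]
      refine List.Pairwise.cons (fun T hT => ?_) ih
      exact Set.disjoint_left.2 fun q hq hqT => hq.2 (pruneRight_subset rest T hT hqT)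

lemma goodL_filter {Q : Type} {L : List (Set Q)} (h : L.Pairwise Disjoint) :
    GoodL (filterNonempty L) :=
  ⟨List.Pairwise.sublist (filterNonempty_sublist L) h, fun _ hS => mem_filterNonempty_ne hS⟩

namespace NBW

variable {α Q : Type}

lemma goodL_stepP (A : NBW α Q) (P : List (Set Q)) (a : α) : GoodL (A.stepP P a) :=
  goodL_filter (pruneRight_pairwise _)

lemma goodL_P0 (A : NBW α Q) : GoodL A.P0 := by
  apply goodL_filter
  refine List.pairwise_cons.2 ⟨?_, by simp⟩
  intro S hS
  rcases List.mem_singleton.1 hS with rfl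
  exact Set.disjoint_left.2 fun q hq hq' => hq.2 hq'.2

lemma goodL_phi (A : NBW α Q) (u : List α) : GoodL (A.phi A.P0 u) := by
  have : ∀ (u : List α) (P : List (Set Q)), GoodL P → GoodL (u.foldl A.stepP P) := by
    intro u
    induction u with
    | nil => exact fun P h => h
    | cons a u ih => exact fun P h => ih _ (A.goodL_stepP P a)
  exact this u A.P0 A.goodL_P0

lemma goodL_length {Q : Type} [Fintype Q] {L : List (Set Q)} (h : GoodL L) :
    L.length ≤ Fintype.card Q := by
  classical
  have hne : ∀ i : Fin L.length, ∃ q, q ∈ L[(i : ℕ)] := by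
    intro i
    exact Set.nonempty_iff_ne_empty.2 (h.2 _ (List.getElem_mem i.2))
  choose f hf using hne
  have hpw := List.pairwise_iff_getElem.1 h.1
  have hinj : Function.Injective f := by
    intro i j hij
    by_contra hne'
    have hij' : (i : ℕ) < j ∨ (j : ℕ) < i := by
      rcases lt_trichotomy (i : ℕ) (j : ℕ) with h' | h' | h'
      · exact Or.inl h'
      · exact absurd (Fin.ext h') hne'
      · exact Or.inr h'
    rcases hij' with h' | h'
    · exact Set.disjoint_left.1 (hpw i j i.2 j.2 h') (hf i) (hij ▸ hf j)
    · exact Set.disjoint_left.1 (hpw j i j.2 i.2 h') (hf j) (hij ▸ hf i)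
  calc L.length = Fintype.card (Fin L.length) := (Fintype.card_fin _).symm
    _ ≤ Fintype.card Q := Fintype.card_le_of_injective f hinj

lemma maxRank_congr (A : NBW α Q) (P : List (Set Q)) {v₁ v₂ : List α}
    (h : ∀ p q, A.Reach p v₁ q ↔ A.Reach p v₂ q) (q : Q) :
    A.maxRank P v₁ q = A.maxRank P v₂ q := by
  unfold maxRank
  congr 1
  ext j
  simp only [Set.mem_setOf_eq]
  constructor
  · rintro ⟨p, hp, hr⟩; exact ⟨p, hp, (h p q).1 hr⟩
  · rintro ⟨p, hp, hr⟩; exact ⟨p, hp, (h p q).2 hr⟩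

end NBW

/-! ### Prefixes and segments of an ω-word -/

def wpre {α : Type} (w : ℕ → α) (n : ℕ) : List α := (List.range n).map w

def wseg {α : Type} (w : ℕ → α) (a b : ℕ) : List α :=
  (List.range (b - a)).map fun t => w (a + t)

lemma wpre_append_wseg {α : Type} (w : ℕ → α) {a b : ℕ} (h : a ≤ b) :
    wpre w a ++ wseg w a b = wpre w b := by
  have hb : b = a + (b - a) := by omega
  rw [wpre, wpre, hb, List.range_add, List.map_append, List.map_map]
  simp [wseg, Function.comp]

lemma wseg_ne_nil {α : Type} (w : ℕ → α) {a b : ℕ} (h : a < b) :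
    wseg w a b ≠ [] := by
  intro hcon
  have : (wseg w a b).length = b - a := by simp [wseg]
  rw [hcon] at this
  simp at this
  omega

lemma wpre_spec {α : Type} (w : ℕ → α) (n : ℕ) :
    wpre w n = List.ofFn fun i : Fin (wpre w n).length => w i.1 := by
  apply List.ext_getElem
  · simp [wpre]
  · intro i h1 h2
    simp [wpre]

end Aux

/-- `Σ^ω = ⋃ { [u]_{∼ᵒ}[v]_{≈ᵒᵤ}^ω : u ∈ Σ*, v ∈ Σ⁺, uv ∼ᵒ u }`. -/
theorem omega_covered_oEq {α Q : Type} [Fintype Q] (A : NBW α Q) (w : ℕ → α) :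
    ∃ u v : List α, v ≠ [] ∧ A.oEq (u ++ v) u ∧
      w ∈ OmegaLang (A.oClass u) (A.oproClass u v) := by
  classical
  haveI : Finite ↥{l : List (Set Q) | l.length ≤ Fintype.card Q} :=
    (List.finite_length_le (Set Q) (Fintype.card Q)).to_subtype
  obtain ⟨c, g, hg, hcol⟩ := infinite_ramsey_pairs
    (fun i j => ((⟨A.phi A.P0 (wpre w j), by
        exact NBW.goodL_length (A.goodL_phi (wpre w j))⟩ :
        ↥{l : List (Set Q) | l.length ≤ Fintype.card Q}),
      fun p q => A.Reach p (wseg w i j) q))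
  have hphi : ∀ j, 1 ≤ j → A.phi A.P0 (wpre w (g j)) = c.1.1 := by
    intro j hj
    exact congrArg (fun x => x.1.1) (hcol 0 j hj)
  have reach_iff : ∀ i j, i < j → ∀ p q,
      A.Reach p (wseg w (g i) (g j)) q ↔ c.2 p q := by
    intro i j hij p q
    exact iff_of_eq (congrFun (congrFun (congrArg Prod.snd (hcol i j hij)) p) q)
  have hguv : wpre w (g 1) ++ wseg w (g 1) (g 2) = wpre w (g 2) :=
    wpre_append_wseg w (hg one_lt_two).le
  have hphiu : A.phi A.P0 (wpre w (g 1)) = c.1.1 := hphi 1 le_rfl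
  have hphiuv : A.phi A.P0 (wpre w (g 1) ++ wseg w (g 1) (g 2)) = c.1.1 := by
    rw [hguv]; exact hphi 2 (by norm_num)
  have hpref : ∀ k : ℕ,
      wpre w (g 1) ++
        ((List.range k).map (fun k => wseg w (g (k+1)) (g (k+2)))).flatten =
      wpre w (g (k+1)) := by
    intro k
    induction k with
    | zero => simp
    | succ k ih =>
        rw [List.range_succ, List.map_append, List.flatten_append,
          ← List.append_assoc, ih]
        simp only [List.map_cons, List.map_nil, List.flatten_cons, List.flatten_nil,
          List.append_nil]
        exact wpre_append_wseg w (hg (by omega)).le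
  refine ⟨wpre w (g 1), wseg w (g 1) (g 2), wseg_ne_nil w (hg one_lt_two), ?_, ?_⟩
  · show A.phi A.P0 _ = A.phi A.P0 _
    rw [hphiuv, hphiu]
  · refine ⟨wpre w (g 1), rfl, fun k => wseg w (g (k+1)) (g (k+2)), fun i => ⟨?_, ?_, ?_⟩, ?_⟩
    · exact wseg_ne_nil w (hg (by omega))
    · -- oEq (u ++ v) (u ++ vs i)
      have hv : A.phi A.P0 (wpre w (g 1) ++ wseg w (g (i+1)) (g (i+2))) = c.1.1 := by
        have h1 : A.phi A.P0 (wpre w (g 1) ++ wseg w (g (i+1)) (g (i+2)))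
            = A.phi A.P0 (wpre w (g (i+1)) ++ wseg w (g (i+1)) (g (i+2))) := by
          rw [A.phi_append, A.phi_append, hphiu, hphi (i+1) (by omega)]
        rw [h1, wpre_append_wseg w (hg (by omega)).le]
        exact hphi (i+2) (by omega)
      show A.phi A.P0 _ = A.phi A.P0 _
      rw [hphiuv, hv]
    · intro q hq
      refine A.maxRank_congr _ (fun p q => ?_) q
      exact (reach_iff 1 2 one_lt_two p q).trans (reach_iff (i+1) (i+2) (by omega) p q).symm
    · intro k
      rw [hpref k]
      exact wpre_spec w (g (k+1))
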